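/- arXiv:1709.09874 — 2 statements merged into one kernel-verified Lean document; each statement's English description precedes it below -/
import Mathlib

section
/- Let u : [0,a) → ℝ^N (with 0 < a ≤ +∞) be a solution of the α-flow with u(t) ∈ ln Ω for all t, and write r_i(t) = e^{u_i(t)}. Then Σ_{i=1}^N u_i(t) is constant in t (equivalently, the product Π_{i=1}^N r_i(t) is preserved along the flow), and there is a constant c > 0 depending only on χ(M) and the maximal vertex degree of the triangulation such that r_i(0)e^{−ct} ≤ r_i(t) ≤ r_i(0)e^{ct} for every i and every t ∈ [0,a); in particular, if a < +∞ then no r_i(t) tends to 0 or to +∞ as t → a. -/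
open Real Filter Topology

namespace IDCP

variable {N : ℕ}

/-- The set of edges: 2-element subsets of vertices contained in some face. -/
def edges (Fc : Finset (Finset (Fin N))) : Finset (Finset (Fin N)) :=
  Fc.biUnion fun f => f.powersetCard 2

/-- `Fc` is the face set of a triangulation of a closed connected surface:
every face has 3 vertices, every edge lies in exactly two faces, and the
1-skeleton is connected. -/
structure IsTriangulation (Fc : Finset (Finset (Fin N))) : Prop where
  card3 : ∀ f ∈ Fc, f.card = 3
  edge2 : ∀ e ∈ edges Fc, (Fc.filter fun f => e ⊆ f).card = 2
  conn : (SimpleGraph.fromRel fun i j => ({i, j} : Finset (Fin N)) ∈ edges Fc).Connected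

/-- Euler characteristic χ(M) = N − |E| + |F|. -/
def chi (Fc : Finset (Finset (Fin N))) : ℤ :=
  (N : ℤ) - ((edges Fc).card : ℤ) + (Fc.card : ℤ)

/-- Edge length l_ij = √(r_i² + r_j² + 2 r_i r_j I_{ij}). -/
noncomputable def len (I : Finset (Fin N) → ℝ) (r : Fin N → ℝ) (i j : Fin N) : ℝ :=
  Real.sqrt (r i ^ 2 + r j ^ 2 + 2 * r i * r j * I {i, j})

/-- The cosine of the inner angle at `i` in triangle `{i,j,k}`. -/
noncomputable def cosAng (I : Finset (Fin N) → ℝ) (r : Fin N → ℝ) (i j k : Fin N) : ℝ :=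
  (len I r i j ^ 2 + len I r i k ^ 2 - len I r j k ^ 2) / (2 * len I r i j * len I r i k)

/-- The auxiliary function Λ. -/
noncomputable def Lam (x : ℝ) : ℝ :=
  if x ≤ -1 then π else if x ≤ 1 then Real.arccos x else 0

/-- Discrete Gaussian curvature K_i = 2π − Σ_{{i,j,k}∈F} θ_i^{jk}.  Every face
containing `i` appears exactly twice (once for each ordering of `j,k`), whence
the factor 1/2. -/
noncomputable def K (Fc : Finset (Finset (Fin N))) (I : Finset (Fin N) → ℝ)
    (r : Fin N → ℝ) (i : Fin N) : ℝ :=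
  2 * π - (1 / 2) * ∑ j, ∑ k,
    (if ({i, j, k} : Finset (Fin N)) ∈ Fc then Real.arccos (cosAng I r i j k) else 0)

/-- Extended curvature K̃_i = 2π − Σ θ̃_i^{jk}, using the generalized angles Λ. -/
noncomputable def Kt (Fc : Finset (Finset (Fin N))) (I : Finset (Fin N) → ℝ)
    (r : Fin N → ℝ) (i : Fin N) : ℝ :=
  2 * π - (1 / 2) * ∑ j, ∑ k,
    (if ({i, j, k} : Finset (Fin N)) ∈ Fc then Lam (cosAng I r i j k) else 0)

/-- The set Ω of inversive distance circle packing metrics. -/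
def Omega (Fc : Finset (Finset (Fin N))) (I : Finset (Fin N) → ℝ) : Set (Fin N → ℝ) :=
  {r | (∀ i, 0 < r i) ∧ ∀ i j k : Fin N, ({i, j, k} : Finset (Fin N)) ∈ Fc →
    len I r j k < len I r i j + len I r i k}

/-- s_α = 2πχ(M)/‖r‖_α^α. -/
noncomputable def sA (Fc : Finset (Finset (Fin N))) (α : ℝ) (r : Fin N → ℝ) : ℝ :=
  2 * π * (chi Fc : ℝ) / ∑ j, r j ^ α

/-- Back from u-coordinates: r_i = e^{u_i}. -/
noncomputable def rOf (u : Fin N → ℝ) : Fin N → ℝ := fun i => Real.exp (u i)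

/-- ln Ω, the image of Ω under the coordinate change r ↦ u, u_i = ln r_i. -/
def lnOmega (Fc : Finset (Finset (Fin N))) (I : Finset (Fin N) → ℝ) : Set (Fin N → ℝ) :=
  {u | rOf u ∈ Omega Fc I}

/-- `u` solves the α-flow du_i/dt = s_α r_i^α − K_i on the time set `D`,
staying in ln Ω. -/
def IsFlowSol (Fc : Finset (Finset (Fin N))) (I : Finset (Fin N) → ℝ) (α : ℝ)
    (D : Set ℝ) (u : ℝ → Fin N → ℝ) : Prop :=
  ∀ t ∈ D, rOf (u t) ∈ Omega Fc I ∧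
    ∀ i, HasDerivWithinAt (fun s => u s i)
      (sA Fc α (rOf (u t)) * rOf (u t) i ^ α - K Fc I (rOf (u t)) i) D t

/-- `u` solves the extended α-flow du_i/dt = s_α r_i^α − K̃_i on the time set `D`. -/
def IsExtFlowSol (Fc : Finset (Finset (Fin N))) (I : Finset (Fin N) → ℝ) (α : ℝ)
    (D : Set ℝ) (u : ℝ → Fin N → ℝ) : Prop :=
  ∀ t ∈ D, ∀ i, HasDerivWithinAt (fun s => u s i)
      (sA Fc α (rOf (u t)) * rOf (u t) i ^ α - Kt Fc I (rOf (u t)) i) D t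

/-- Lk(A): pairs (e,v) with both endpoints of e outside A, v ∈ A, and e,v spanning a face. -/
def Lk (Fc : Finset (Finset (Fin N))) (A : Finset (Fin N)) :
    Finset (Finset (Fin N) × Fin N) :=
  ((edges Fc) ×ˢ (Finset.univ : Finset (Fin N))).filter fun p =>
    (∀ x ∈ p.1, x ∉ A) ∧ p.2 ∈ A ∧ insert p.2 p.1 ∈ Fc

/-- Euler characteristic χ(F_A) of the subcomplex spanned by A. -/
def chiSub (Fc : Finset (Finset (Fin N))) (A : Finset (Fin N)) : ℤ :=
  (A.card : ℤ) - (((edges Fc).filter (fun e => e ⊆ A)).card : ℤ)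
    + ((Fc.filter (fun f => f ⊆ A)).card : ℤ)

/-- The lower bound −Σ_{(e,v)∈Lk(A)}(π − Λ(I_e)) + 2πχ(F_A) defining Y_A. -/
noncomputable def Ybound (Fc : Finset (Finset (Fin N))) (I : Finset (Fin N) → ℝ)
    (A : Finset (Fin N)) : ℝ :=
  -(∑ p ∈ Lk Fc A, (π - Lam (I p.1))) + 2 * π * (chiSub Fc A : ℝ)

/-- x ∈ Y. -/
noncomputable def memY (Fc : Finset (Finset (Fin N))) (I : Finset (Fin N) → ℝ)
    (x : Fin N → ℝ) : Prop :=
  (∑ i, x i) = 2 * π * (chi Fc : ℝ) ∧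
    ∀ A : Finset (Fin N), A.Nonempty → A ≠ Finset.univ → Ybound Fc I A < ∑ i ∈ A, x i

/-- x ∈ Ȳ. -/
noncomputable def memYbar (Fc : Finset (Finset (Fin N))) (I : Finset (Fin N) → ℝ)
    (x : Fin N → ℝ) : Prop :=
  (∑ i, x i) = 2 * π * (chi Fc : ℝ) ∧
    ∀ A : Finset (Fin N), A.Nonempty → A ≠ Finset.univ → Ybound Fc I A ≤ ∑ i ∈ A, x i

section Helpers

lemma angle_sum_of_triangle {a b c : ℝ} (ha : 0 < a) (hb : 0 < b) (hc : 0 < c)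
    (h1 : a < b + c) (h2 : b < a + c) (h3 : c < a + b) :
    Real.arccos ((b^2 + c^2 - a^2)/(2*b*c)) + Real.arccos ((a^2 + c^2 - b^2)/(2*a*c))
      + Real.arccos ((a^2 + b^2 - c^2)/(2*a*b)) = π := by
  set x := (b^2 + c^2 - a^2)/(2*b*c) with hxdef
  set y := (a^2 + c^2 - b^2)/(2*a*c) with hydef
  set z := (a^2 + b^2 - c^2)/(2*a*b) with hzdef
  have hbc : (0:ℝ) < 2*b*c := by positivity
  have hac : (0:ℝ) < 2*a*c := by positivity
  have hab : (0:ℝ) < 2*a*b := by positivity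
  have hx1 : -1 < x := by rw [hxdef, lt_div_iff₀ hbc]; nlinarith
  have hx2 : x < 1 := by rw [hxdef, div_lt_iff₀ hbc]; nlinarith
  have hy1 : -1 < y := by rw [hydef, lt_div_iff₀ hac]; nlinarith
  have hy2 : y < 1 := by rw [hydef, div_lt_iff₀ hac]; nlinarith
  have hz1 : -1 < z := by rw [hzdef, lt_div_iff₀ hab]; nlinarith
  have hz2 : z < 1 := by rw [hzdef, div_lt_iff₀ hab]; nlinarith
  set A := Real.arccos x with hA
  set B := Real.arccos y with hB
  set Q := 2*a^2*b^2 + 2*b^2*c^2 + 2*a^2*c^2 - a^4 - b^4 - c^4 with hQ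
  have hQpos : 0 < Q := by
    have h4 := mul_pos (mul_pos (mul_pos (by linarith : (0:ℝ) < a+b+c)
      (by linarith : (0:ℝ) < b+c-a)) (by linarith : (0:ℝ) < a+c-b))
      (by linarith : (0:ℝ) < a+b-c)
    nlinarith [h4]
  have hsq : Real.sqrt Q ^ 2 = Q := Real.sq_sqrt hQpos.le
  have hsqpos : 0 < Real.sqrt Q := Real.sqrt_pos.mpr hQpos
  have hsinA : Real.sin A = Real.sqrt Q / (2*b*c) := by
    rw [hA, Real.sin_arccos,
      show 1 - x^2 = Q / (2*b*c)^2 by rw [hxdef]; field_simp; ring,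
      Real.sqrt_div hQpos.le, Real.sqrt_sq hbc.le]
  have hsinB : Real.sin B = Real.sqrt Q / (2*a*c) := by
    rw [hB, Real.sin_arccos,
      show 1 - y^2 = Q / (2*a*c)^2 by rw [hydef]; field_simp; ring,
      Real.sqrt_div hQpos.le, Real.sqrt_sq hac.le]
  have hcosA : Real.cos A = x := Real.cos_arccos hx1.le hx2.le
  have hcosB : Real.cos B = y := Real.cos_arccos hy1.le hy2.le
  have hsinAB : Real.sin (A + B) = Real.sqrt Q / (2*a*b) := by
    rw [Real.sin_add, hsinA, hsinB, hcosA, hcosB, hxdef, hydef]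
    field_simp
    ring
  have hsinABpos : 0 < Real.sin (A + B) := by rw [hsinAB]; positivity
  have hApos : 0 < A := by rw [hA]; exact Real.arccos_pos.mpr hx2
  have hBpos : 0 < B := by rw [hB]; exact Real.arccos_pos.mpr hy2
  have hAle : A ≤ π := Real.arccos_le_pi x
  have hBle : B ≤ π := Real.arccos_le_pi y
  have hABlt : A + B < π := by
    by_contra h
    push_neg at h
    have h2pi : A + B - π ≤ π := by linarith
    have : 0 ≤ Real.sin (A + B - π) := Real.sin_nonneg_of_nonneg_of_le_pi (by linarith) h2pi
    rw [show A + B - π = -(π - (A+B)) by ring, Real.sin_neg, Real.sin_pi_sub] at this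
    linarith
  have hcosAB : Real.cos (A + B) = -z := by
    rw [Real.cos_add, hsinA, hsinB, hcosA, hcosB, hxdef, hydef, hzdef]
    have hQQ : Real.sqrt Q * Real.sqrt Q = Q := Real.mul_self_sqrt hQpos.le
    field_simp
    ring_nf
    rw [hsq, hQ]; ring
  have : Real.arccos z = π - (A + B) := by
    rw [show z = Real.cos (π - (A+B)) by rw [Real.cos_pi_sub, hcosAB]; ring]
    exact Real.arccos_cos (by linarith) (by linarith)
  rw [this]; ring

variable {N : ℕ}

lemma mem_edges {Fc : Finset (Finset (Fin N))} {e : Finset (Fin N)} :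
    e ∈ edges Fc ↔ ∃ f ∈ Fc, e ⊆ f ∧ e.card = 2 := by
  simp [edges, Finset.mem_biUnion, Finset.mem_powersetCard]

lemma three_mul_card {Fc : Finset (Finset (Fin N))} (hT : IsTriangulation Fc) :
    3 * Fc.card = 2 * (edges Fc).card := by
  have key : ∑ f ∈ Fc, ∑ e ∈ edges Fc, (if e ⊆ f then 1 else 0)
      = ∑ e ∈ edges Fc, ∑ f ∈ Fc, (if e ⊆ f then 1 else 0) := Finset.sum_comm
  have hL : ∀ f ∈ Fc, ∑ e ∈ edges Fc, (if e ⊆ f then 1 else 0) = 3 := by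
    intro f hf
    rw [Finset.sum_boole]
    have : (edges Fc).filter (fun e => e ⊆ f) = f.powersetCard 2 := by
      ext e
      simp only [Finset.mem_filter, mem_edges, Finset.mem_powersetCard]
      constructor
      · rintro ⟨⟨g, _, _, hc⟩, hef⟩; exact ⟨hef, hc⟩
      · rintro ⟨hef, hc⟩; exact ⟨⟨f, hf, hef, hc⟩, hef⟩
    rw [this, Finset.card_powersetCard, hT.card3 f hf]
    norm_num
  have hR : ∀ e ∈ edges Fc, ∑ f ∈ Fc, (if e ⊆ f then 1 else 0) = 2 := by
    intro e he
    rw [Finset.sum_boole, hT.edge2 e he]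
    norm_num
  rw [Finset.sum_congr rfl hL, Finset.sum_congr rfl hR] at key
  simpa [Finset.sum_const, mul_comm] using key

lemma triple_perm {a b c x y z : Fin N} (hxy : x ≠ y) (hxz : x ≠ z) (hyz : y ≠ z)
    (h : ({a, b, c} : Finset (Fin N)) = {x, y, z}) :
    (a,b,c) = (x,y,z) ∨ (a,b,c) = (x,z,y) ∨ (a,b,c) = (y,x,z) ∨
      (a,b,c) = (y,z,x) ∨ (a,b,c) = (z,x,y) ∨ (a,b,c) = (z,y,x) := by
  have ha : a = x ∨ a = y ∨ a = z := by
    have : a ∈ ({x,y,z} : Finset (Fin N)) := h ▸ (by simp)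
    simpa using this
  have hb : b = x ∨ b = y ∨ b = z := by
    have : b ∈ ({x,y,z} : Finset (Fin N)) := h ▸ (by simp)
    simpa using this
  have hcc : c = x ∨ c = y ∨ c = z := by
    have : c ∈ ({x,y,z} : Finset (Fin N)) := h ▸ (by simp)
    simpa using this
  have hx : x = a ∨ x = b ∨ x = c := by
    have : x ∈ ({a,b,c} : Finset (Fin N)) := h.symm ▸ (by simp)
    simpa using this
  have hy : y = a ∨ y = b ∨ y = c := by
    have : y ∈ ({a,b,c} : Finset (Fin N)) := h.symm ▸ (by simp)
    simpa using this
  have hz : z = a ∨ z = b ∨ z = c := by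
    have : z ∈ ({a,b,c} : Finset (Fin N)) := h.symm ▸ (by simp)
    simpa using this
  rcases ha with rfl|rfl|rfl <;> rcases hb with rfl|rfl|rfl <;>
    rcases hcc with rfl|rfl|rfl <;> simp_all <;> tauto

lemma perm3a (x y z : Fin N) : ({y,x,z} : Finset (Fin N)) = {x,y,z} := by
  ext w; simp; tauto

lemma perm3b (x y z : Fin N) : ({z,x,y} : Finset (Fin N)) = {x,y,z} := by
  ext w; simp; tauto

lemma perm3c (x y z : Fin N) : ({x,z,y} : Finset (Fin N)) = {x,y,z} := by
  ext w; simp; tauto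

lemma perm3d (x y z : Fin N) : ({y,z,x} : Finset (Fin N)) = {x,y,z} := by
  ext w; simp; tauto

lemma perm3e (x y z : Fin N) : ({z,y,x} : Finset (Fin N)) = {x,y,z} := by
  ext w; simp; tauto

lemma len_symm (I : Finset (Fin N) → ℝ) (r : Fin N → ℝ) (i j : Fin N) :
    len I r i j = len I r j i := by
  unfold len
  rw [Finset.pair_comm i j]
  congr 1
  ring

lemma len_pos {I : Finset (Fin N) → ℝ} {r : Fin N → ℝ} {i j : Fin N}
    (hi : 0 < r i) (hj : 0 < r j) (hIij : 0 ≤ I {i,j}) : 0 < len I r i j := by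
  unfold len
  apply Real.sqrt_pos.mpr
  have : 0 ≤ 2 * r i * r j * I {i,j} := by positivity
  nlinarith

lemma edge_of_face {Fc : Finset (Finset (Fin N))} {f : Finset (Fin N)} (hf : f ∈ Fc)
    {i j : Fin N} (hij : i ≠ j) (hsub : ({i,j} : Finset (Fin N)) ⊆ f) :
    ({i,j} : Finset (Fin N)) ∈ edges Fc :=
  mem_edges.mpr ⟨f, hf, hsub, Finset.card_pair hij⟩

/-- Sum of the six angles of a face is 2π. -/
lemma face_angle_sum {Fc : Finset (Finset (Fin N))} {I : Finset (Fin N) → ℝ}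
    {r : Fin N → ℝ} (hI : ∀ e ∈ edges Fc, 0 ≤ I e) (hOm : r ∈ Omega Fc I)
    {x y z : Fin N} (hxy : x ≠ y) (hxz : x ≠ z) (hyz : y ≠ z)
    (hf : ({x,y,z} : Finset (Fin N)) ∈ Fc) :
    Real.arccos (cosAng I r x y z) + Real.arccos (cosAng I r x z y) +
    Real.arccos (cosAng I r y x z) + Real.arccos (cosAng I r y z x) +
    Real.arccos (cosAng I r z x y) + Real.arccos (cosAng I r z y x) = 2 * π := by
  obtain ⟨hrpos, htri⟩ := hOm
  have hIxy : 0 ≤ I {x,y} := hI _ (edge_of_face hf hxy (by intro w hw; simp at hw; rcases hw with rfl|rfl <;> simp))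
  have hIxz : 0 ≤ I {x,z} := hI _ (edge_of_face hf hxz (by intro w hw; simp at hw; rcases hw with rfl|rfl <;> simp))
  have hIyz : 0 ≤ I {y,z} := hI _ (edge_of_face hf hyz (by intro w hw; simp at hw; rcases hw with rfl|rfl <;> simp))
  have ha : 0 < len I r y z := len_pos (hrpos y) (hrpos z) hIyz
  have hb : 0 < len I r x y := len_pos (hrpos x) (hrpos y) hIxy
  have hc : 0 < len I r x z := len_pos (hrpos x) (hrpos z) hIxz
  have h1 : len I r y z < len I r x y + len I r x z := htri x y z hf
  have h2 : len I r x y < len I r y z + len I r x z := by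
    have h' := htri z x y (by rw [perm3b]; exact hf)
    rw [len_symm I r z x, len_symm I r z y] at h'
    linarith
  have h3 : len I r x z < len I r y z + len I r x y := by
    have h' := htri y x z (by rw [perm3a]; exact hf)
    rw [len_symm I r y x] at h'
    linarith
  have E := angle_sum_of_triangle ha hb hc h1 h2 h3
  have e1 : cosAng I r x y z
      = (len I r x y^2 + len I r x z^2 - len I r y z^2)/(2*len I r x y*len I r x z) := rfl
  have e2 : cosAng I r x z y
      = (len I r x y^2 + len I r x z^2 - len I r y z^2)/(2*len I r x y*len I r x z) := by
    unfold cosAng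
    rw [len_symm I r z y]
    try ring
  have e3 : cosAng I r y x z
      = (len I r y z^2 + len I r x y^2 - len I r x z^2)/(2*len I r y z*len I r x y) := by
    unfold cosAng
    rw [len_symm I r y x]
    try ring
  have e4 : cosAng I r y z x
      = (len I r y z^2 + len I r x y^2 - len I r x z^2)/(2*len I r y z*len I r x y) := by
    unfold cosAng
    rw [len_symm I r y x, len_symm I r z x]
    try ring
  have e5 : cosAng I r z x y
      = (len I r y z^2 + len I r x z^2 - len I r x y^2)/(2*len I r y z*len I r x z) := by
    unfold cosAng
    rw [len_symm I r z x, len_symm I r z y]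
    try ring
  have e6 : cosAng I r z y x
      = (len I r y z^2 + len I r x z^2 - len I r x y^2)/(2*len I r y z*len I r x z) := by
    unfold cosAng
    rw [len_symm I r z y, len_symm I r z x, len_symm I r y x]
    try ring
  rw [e1, e2, e3, e4, e5, e6]
  linarith [E]


/-- The sum of angles over the fiber of a face is 2π. -/
lemma fiber_face_sum {Fc : Finset (Finset (Fin N))} {I : Finset (Fin N) → ℝ}
    {r : Fin N → ℝ} (hT : IsTriangulation Fc) (hI : ∀ e ∈ edges Fc, 0 ≤ I e)
    (hOm : r ∈ Omega Fc I) {f : Finset (Fin N)} (hf : f ∈ Fc) :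
    ∑ t ∈ (Finset.filter (fun t : Fin N × Fin N × Fin N =>
        ({t.1, t.2.1, t.2.2} : Finset (Fin N)) = f)
        (Finset.filter (fun t : Fin N × Fin N × Fin N =>
        ({t.1, t.2.1, t.2.2} : Finset (Fin N)) ∈ Fc) Finset.univ)),
      Real.arccos (cosAng I r t.1 t.2.1 t.2.2) = 2 * π := by
  classical
  obtain ⟨x, y, z, hxy, hxz, hyz, hfeq⟩ := Finset.card_eq_three.mp (hT.card3 f hf)
  have hxf : ({x,y,z} : Finset (Fin N)) ∈ Fc := hfeq ▸ hf
  have hfilter : (Finset.filter (fun t : Fin N × Fin N × Fin N =>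
        ({t.1, t.2.1, t.2.2} : Finset (Fin N)) = f)
        (Finset.filter (fun t : Fin N × Fin N × Fin N =>
        ({t.1, t.2.1, t.2.2} : Finset (Fin N)) ∈ Fc) Finset.univ))
      = ({(x,y,z),(x,z,y),(y,x,z),(y,z,x),(z,x,y),(z,y,x)} :
          Finset (Fin N × Fin N × Fin N)) := by
    ext t
    obtain ⟨a0, b0, c0⟩ := t
    simp only [Finset.mem_filter, Finset.mem_univ, true_and, Finset.mem_insert,
      Finset.mem_singleton]
    constructor
    · rintro ⟨-, hEq⟩
      exact triple_perm hxy hxz hyz (by rw [hEq, hfeq])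
    · rintro (h|h|h|h|h|h) <;> simp only [Prod.mk.injEq] at h <;>
        rw [h.1, h.2.1, h.2.2]
      exacts [⟨hxf, hfeq.symm⟩,
        ⟨by rw [perm3c x y z]; exact hxf, by rw [perm3c x y z]; exact hfeq.symm⟩,
        ⟨by rw [perm3a x y z]; exact hxf, by rw [perm3a x y z]; exact hfeq.symm⟩,
        ⟨by rw [perm3d x y z]; exact hxf, by rw [perm3d x y z]; exact hfeq.symm⟩,
        ⟨by rw [perm3b x y z]; exact hxf, by rw [perm3b x y z]; exact hfeq.symm⟩,
        ⟨by rw [perm3e x y z]; exact hxf, by rw [perm3e x y z]; exact hfeq.symm⟩]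
  rw [hfilter]
  have h1 : ((x,y,z) : Fin N × Fin N × Fin N) ∉
      ({(x,z,y),(y,x,z),(y,z,x),(z,x,y),(z,y,x)} : Finset _) := by
    simp [Prod.mk.injEq, hxy, hxz, hyz, Ne.symm hxy, Ne.symm hxz, Ne.symm hyz]
  have h2 : ((x,z,y) : Fin N × Fin N × Fin N) ∉
      ({(y,x,z),(y,z,x),(z,x,y),(z,y,x)} : Finset _) := by
    simp [Prod.mk.injEq, hxy, hxz, hyz, Ne.symm hxy, Ne.symm hxz, Ne.symm hyz]
  have h3 : ((y,x,z) : Fin N × Fin N × Fin N) ∉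
      ({(y,z,x),(z,x,y),(z,y,x)} : Finset _) := by
    simp [Prod.mk.injEq, hxy, hxz, hyz, Ne.symm hxy, Ne.symm hxz, Ne.symm hyz]
  have h4 : ((y,z,x) : Fin N × Fin N × Fin N) ∉
      ({(z,x,y),(z,y,x)} : Finset _) := by
    simp [Prod.mk.injEq, hxy, hxz, hyz, Ne.symm hxy, Ne.symm hxz, Ne.symm hyz]
  have h5 : ((z,x,y) : Fin N × Fin N × Fin N) ∉
      ({(z,y,x)} : Finset _) := by
    simp [Prod.mk.injEq, hxy, hxz, hyz, Ne.symm hxy, Ne.symm hxz, Ne.symm hyz]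
  rw [Finset.sum_insert h1, Finset.sum_insert h2, Finset.sum_insert h3,
    Finset.sum_insert h4, Finset.sum_insert h5, Finset.sum_singleton]
  have := face_angle_sum hI hOm hxy hxz hyz hxf
  dsimp only
  linarith [this]

lemma triple_sum {Fc : Finset (Finset (Fin N))} {I : Finset (Fin N) → ℝ}
    {r : Fin N → ℝ} (hT : IsTriangulation Fc) (hI : ∀ e ∈ edges Fc, 0 ≤ I e)
    (hOm : r ∈ Omega Fc I) :
    ∑ i, ∑ j, ∑ k, (if ({i, j, k} : Finset (Fin N)) ∈ Fc then
      Real.arccos (cosAng I r i j k) else 0) = 2 * π * Fc.card := by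
  classical
  have hstep : ∑ i, ∑ j, ∑ k, (if ({i, j, k} : Finset (Fin N)) ∈ Fc then
      Real.arccos (cosAng I r i j k) else 0)
      = ∑ t : Fin N × Fin N × Fin N, (if ({t.1, t.2.1, t.2.2} : Finset (Fin N)) ∈ Fc
          then Real.arccos (cosAng I r t.1 t.2.1 t.2.2) else 0) := by
    rw [Fintype.sum_prod_type]
    exact Finset.sum_congr rfl fun i _ => (Fintype.sum_prod_type
      (fun p : Fin N × Fin N => if ({i, p.1, p.2} : Finset (Fin N)) ∈ Fc then
        Real.arccos (cosAng I r i p.1 p.2) else 0)).symm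
  rw [hstep, ← Finset.sum_filter, ← Finset.sum_fiberwise_of_maps_to
    (g := fun t : Fin N × Fin N × Fin N => ({t.1, t.2.1, t.2.2} : Finset (Fin N)))
    (fun t ht => (Finset.mem_filter.mp ht).2)
    (fun t => Real.arccos (cosAng I r t.1 t.2.1 t.2.2)),
    Finset.sum_congr rfl (fun f hf => fiber_face_sum hT hI hOm hf),
    Finset.sum_const, nsmul_eq_mul]
  ring

lemma sum_K {Fc : Finset (Finset (Fin N))} {I : Finset (Fin N) → ℝ}
    {r : Fin N → ℝ} (hT : IsTriangulation Fc) (hI : ∀ e ∈ edges Fc, 0 ≤ I e)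
    (hOm : r ∈ Omega Fc I) :
    ∑ i, K Fc I r i = 2 * π * N - π * Fc.card := by
  unfold K
  rw [Finset.sum_sub_distrib, Finset.sum_const, ← Finset.mul_sum,
    triple_sum hT hI hOm, Finset.card_univ, Fintype.card_fin, nsmul_eq_mul]
  ring

lemma flow_deriv_sum_zero {Fc : Finset (Finset (Fin N))} (hT : IsTriangulation Fc)
    {I : Finset (Fin N) → ℝ} (hI : ∀ e ∈ edges Fc, 0 ≤ I e)
    {r : Fin N → ℝ} (hOm : r ∈ Omega Fc I) (α : ℝ) :
    ∑ i, (sA Fc α r * r i ^ α - K Fc I r i) = 0 := by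
  haveI : Nonempty (Fin N) := hT.conn.nonempty
  have hS : 0 < ∑ j, r j ^ α :=
    Finset.sum_pos (fun j _ => Real.rpow_pos_of_pos (hOm.1 j) α) Finset.univ_nonempty
  rw [Finset.sum_sub_distrib, ← Finset.mul_sum, sum_K hT hI hOm]
  rw [sA, div_mul_cancel₀ _ hS.ne']
  have h3 : (3:ℝ) * Fc.card = 2 * (edges Fc).card := by exact_mod_cast three_mul_card hT
  have hchi : (chi Fc : ℝ) = (N:ℝ) - (edges Fc).card + Fc.card := by
    rw [chi]; push_cast; ring
  rw [hchi]
  linear_combination π * h3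

lemma K_abs_le {Fc : Finset (Finset (Fin N))} (I : Finset (Fin N) → ℝ)
    (r : Fin N → ℝ) (i : Fin N) : |K Fc I r i| ≤ 2*π + π*(N:ℝ)^2/2 := by
  unfold K
  have h1 : 0 ≤ ∑ j, ∑ k, (if ({i, j, k} : Finset (Fin N)) ∈ Fc then
      Real.arccos (cosAng I r i j k) else 0) := by
    apply Finset.sum_nonneg; intro j _
    apply Finset.sum_nonneg; intro k _
    split
    · exact Real.arccos_nonneg _
    · exact le_refl 0
  have h2 : ∑ j, ∑ k, (if ({i, j, k} : Finset (Fin N)) ∈ Fc then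
      Real.arccos (cosAng I r i j k) else 0) ≤ (N:ℝ)^2 * π := by
    calc ∑ j, ∑ k, (if ({i, j, k} : Finset (Fin N)) ∈ Fc then
        Real.arccos (cosAng I r i j k) else 0)
        ≤ ∑ (_ : Fin N), ∑ (_ : Fin N), π := by
          apply Finset.sum_le_sum; intro j _
          apply Finset.sum_le_sum; intro k _
          split
          · exact Real.arccos_le_pi _
          · exact Real.pi_pos.le
      _ = (N:ℝ)^2 * π := by
          simp [Finset.sum_const, Finset.card_univ, nsmul_eq_mul]
          ring
  rw [abs_le]
  constructor <;> nlinarith [Real.pi_pos]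

lemma sA_abs_le {Fc : Finset (Finset (Fin N))} {α : ℝ} {r : Fin N → ℝ}
    (hr : ∀ j, 0 < r j) (i : Fin N) :
    |sA Fc α r * r i ^ α| ≤ 2*π*|(chi Fc : ℝ)| := by
  have hS : 0 < ∑ j, r j ^ α :=
    Finset.sum_pos (fun j _ => Real.rpow_pos_of_pos (hr j) α) ⟨i, Finset.mem_univ i⟩
  have hq : 0 < r i ^ α := Real.rpow_pos_of_pos (hr i) α
  have hle : r i ^ α ≤ ∑ j, r j ^ α :=
    Finset.single_le_sum (fun j _ => (Real.rpow_pos_of_pos (hr j) α).le) (Finset.mem_univ i)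
  have habs : |2*π*(chi Fc : ℝ)| = 2*π*|(chi Fc : ℝ)| := by
    rw [abs_mul, abs_of_pos (by positivity : (0:ℝ) < 2*π)]
  rw [sA, abs_mul, abs_div, abs_of_pos hS, abs_of_pos hq, habs,
    div_mul_eq_mul_div, div_le_iff₀ hS]
  have := mul_le_mul_of_nonneg_left hle (by positivity : (0:ℝ) ≤ 2*π*|(chi Fc : ℝ)|)
  linarith

end Helpers
/-- along any solution of the α-flow, Σ u_i(t) is constant, and
there is a constant c > 0 (depending only on the triangulation data, not on
the solution, the time, or the length of the existence interval) with
r_i(0)e^{−ct} ≤ r_i(t) ≤ r_i(0)e^{ct}; in particular for finite `a` no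
r_i(t) tends to 0 or +∞ as t → a. -/
theorem stmt0 {N : ℕ} (Fc : Finset (Finset (Fin N))) (hT : IsTriangulation Fc)
    (I : Finset (Fin N) → ℝ) (hI : ∀ e ∈ edges Fc, 0 ≤ I e) (α : ℝ) :
    ∃ c : ℝ, 0 < c ∧
      ∀ (a : EReal), 0 < a → ∀ u : ℝ → Fin N → ℝ,
        IsFlowSol Fc I α {t : ℝ | 0 ≤ t ∧ (t : EReal) < a} u →
        (∀ t : ℝ, 0 ≤ t → (t : EReal) < a → (∑ i, u t i) = ∑ i, u 0 i) ∧
        (∀ i : Fin N, ∀ t : ℝ, 0 ≤ t → (t : EReal) < a →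
          Real.exp (u 0 i) * Real.exp (-c * t) ≤ Real.exp (u t i) ∧
          Real.exp (u t i) ≤ Real.exp (u 0 i) * Real.exp (c * t)) ∧
        (a ≠ ⊤ → ∀ i : Fin N,
          ¬ Tendsto (fun t => Real.exp (u t i))
              (nhdsWithin a.toReal (Set.Iio a.toReal)) (nhds 0) ∧
          ¬ Tendsto (fun t => Real.exp (u t i))
              (nhdsWithin a.toReal (Set.Iio a.toReal)) atTop) := by
  classical
  refine ⟨2*π*|(chi Fc : ℝ)| + (2*π + π*(N:ℝ)^2/2) + 1, by positivity, ?_⟩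
  set c : ℝ := 2*π*|(chi Fc : ℝ)| + (2*π + π*(N:ℝ)^2/2) + 1 with hc
  have hcpos : 0 < c := by positivity
  intro a ha u hu
  set D : Set ℝ := {t : ℝ | 0 ≤ t ∧ (t:EReal) < a} with hD
  have hD0 : (0:ℝ) ∈ D := ⟨le_refl 0, by simpa using ha⟩
  have hDord : D.OrdConnected := by
    constructor
    intro s hs t ht w hw
    exact ⟨le_trans hs.1 hw.1,
      lt_of_le_of_lt (EReal.coe_le_coe_iff.mpr hw.2) ht.2⟩
  have hDconv : Convex ℝ D := hDord.convex
  have hbound : ∀ t ∈ D, ∀ i,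
      |sA Fc α (rOf (u t)) * rOf (u t) i ^ α - K Fc I (rOf (u t)) i| ≤ c := by
    intro t ht i
    have h1 := sA_abs_le (Fc := Fc) (α := α) (r := rOf (u t))
      (fun j => Real.exp_pos _) i
    have h2 := K_abs_le (Fc := Fc) I (rOf (u t)) i
    calc |sA Fc α (rOf (u t)) * rOf (u t) i ^ α - K Fc I (rOf (u t)) i|
        ≤ |sA Fc α (rOf (u t)) * rOf (u t) i ^ α| + |K Fc I (rOf (u t)) i| :=
          abs_sub _ _
      _ ≤ c := by rw [hc]; linarith
  have hconst : ∀ t ∈ D, (∑ i, u t i) = ∑ i, u 0 i := by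
    intro t ht
    have hder : ∀ s ∈ D, HasDerivWithinAt (fun w => ∑ i, u w i)
        ((fun _ => (0:ℝ)) s) D s := by
      intro s hs
      have h := HasDerivWithinAt.fun_sum (u := Finset.univ)
        (fun i (_ : i ∈ Finset.univ) => ((hu s hs).2 i))
      rwa [flow_deriv_sum_zero hT hI (hu s hs).1 α] at h
    have := hDconv.norm_image_sub_le_of_norm_hasDerivWithin_le (C := 0) hder
      (fun s _ => by simp) hD0 ht
    rw [zero_mul] at this
    have h0 : ‖(∑ i, u t i) - ∑ i, u 0 i‖ = 0 := le_antisymm this (norm_nonneg _)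
    rw [norm_eq_zero, sub_eq_zero] at h0
    exact h0
  have hexp : ∀ i, ∀ t:ℝ, 0 ≤ t → (t:EReal) < a → |u t i - u 0 i| ≤ c * t := by
    intro i t h0 hta
    have ht : t ∈ D := ⟨h0, hta⟩
    have hder : ∀ s ∈ D, HasDerivWithinAt (fun w => u w i)
        ((fun s => sA Fc α (rOf (u s)) * rOf (u s) i ^ α - K Fc I (rOf (u s)) i) s)
        D s := fun s hs => (hu s hs).2 i
    have hbd : ∀ s ∈ D,
        ‖sA Fc α (rOf (u s)) * rOf (u s) i ^ α - K Fc I (rOf (u s)) i‖ ≤ c :=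
      fun s hs => by rw [Real.norm_eq_abs]; exact hbound s hs i
    have := hDconv.norm_image_sub_le_of_norm_hasDerivWithin_le hder hbd hD0 ht
    rwa [Real.norm_eq_abs, sub_zero, Real.norm_eq_abs, abs_of_nonneg h0] at this
  refine ⟨fun t h0 hta => hconst t ⟨h0, hta⟩, fun i t h0 hta => ?_, ?_⟩
  · have h := abs_le.mp (hexp i t h0 hta)
    constructor
    · rw [← Real.exp_add]; exact Real.exp_le_exp.mpr (by linarith [h.1])
    · rw [← Real.exp_add]; exact Real.exp_le_exp.mpr (by linarith [h.2])
  · intro haT i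
    have hbot : a ≠ ⊥ := by
      intro hb; rw [hb] at ha; exact absurd ha (by simp)
    set T := a.toReal with hT'
    have hTa : (T : EReal) = a := EReal.coe_toReal haT hbot
    have hTpos : 0 < T := by
      have h0T : ((0:ℝ):EReal) < (T:EReal) := by rw [hTa]; simpa using ha
      exact_mod_cast h0T
    have hIoo : Set.Ioo 0 T ∈ nhdsWithin T (Set.Iio T) :=
      Ioo_mem_nhdsLT_of_mem ⟨hTpos, le_refl T⟩
    have hev : ∀ᶠ t in nhdsWithin T (Set.Iio T),
        Real.exp (u 0 i) * Real.exp (-c*T) ≤ Real.exp (u t i) ∧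
        Real.exp (u t i) ≤ Real.exp (u 0 i) * Real.exp (c*T) := by
      filter_upwards [hIoo] with t ht
      have h0 : 0 ≤ t := ht.1.le
      have hta : (t:EReal) < a := by rw [← hTa]; exact_mod_cast ht.2
      have h := abs_le.mp (hexp i t h0 hta)
      have hct : c * t ≤ c * T := by nlinarith [ht.2]
      constructor
      · rw [← Real.exp_add]; apply Real.exp_le_exp.mpr; nlinarith [h.1]
      · rw [← Real.exp_add]; apply Real.exp_le_exp.mpr; nlinarith [h.2]
    haveI : (nhdsWithin T (Set.Iio T)).NeBot := nhdsLT_neBot T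
    constructor
    · intro hlim
      have hm : (0:ℝ) < Real.exp (u 0 i) * Real.exp (-c*T) := by positivity
      have hevlt := hlim.eventually_lt_const hm
      obtain ⟨t, hA, hB⟩ := (hev.and hevlt).exists
      exact absurd hA.1 (not_le.mpr hB)
    · intro hlim
      have hevgt := hlim.eventually_gt_atTop (Real.exp (u 0 i) * Real.exp (c*T))
      obtain ⟨t, hA, hB⟩ := (hev.and hevgt).exists
      exact absurd hA.2 (not_le.mpr hB)

end IDCP
end

section
/- Let f : ℝⁿ → ℝ be continuous, and suppose that for every direction ξ in the unit sphere S^{n−1} the function t ↦ f(tξ) is monotone increasing on [0,+∞) and tends to +∞ as t → +∞. Then lim_{‖x‖→∞} f(x) = +∞, i.e. for every M > 0 there is R > 0 such that f(x) > M whenever ‖x‖ > R. -/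
open Real Filter Topology

namespace IDCP

variable {N : ℕ}

/-- if f : ℝⁿ → ℝ is continuous and along every unit direction ξ
the function t ↦ f(tξ) is monotone increasing on [0,∞) and tends to +∞, then
f(x) → +∞ as ‖x‖ → ∞. -/
theorem stmt11 (n : ℕ) (f : EuclideanSpace ℝ (Fin n) → ℝ) (hf : Continuous f)
    (hmono : ∀ ξ : EuclideanSpace ℝ (Fin n), ‖ξ‖ = 1 →
      MonotoneOn (fun t : ℝ => f (t • ξ)) (Set.Ici 0))
    (htend : ∀ ξ : EuclideanSpace ℝ (Fin n), ‖ξ‖ = 1 →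
      Tendsto (fun t : ℝ => f (t • ξ)) atTop atTop) :
    ∀ M : ℝ, 0 < M → ∃ R : ℝ, 0 < R ∧
      ∀ x : EuclideanSpace ℝ (Fin n), R < ‖x‖ → M < f x := by
  intro M hM
  have key : ∀ ξ : EuclideanSpace ℝ (Fin n), ∃ s : ℝ, 0 < s ∧ (‖ξ‖ = 1 → M < f (s • ξ)) := by
    intro ξ
    by_cases hξ : ‖ξ‖ = 1
    · obtain ⟨s, h1, h2⟩ :=
        (((htend ξ hξ).eventually_gt_atTop M).and (eventually_gt_atTop (0 : ℝ))).exists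
      exact ⟨s, h2, fun _ => h1⟩
    · exact ⟨1, one_pos, fun h => absurd h hξ⟩
  choose t ht0 htM using key
  set U : EuclideanSpace ℝ (Fin n) → Set (EuclideanSpace ℝ (Fin n)) :=
    fun ξ => {η | M < f (t ξ • η)} with hU
  have hcomp : IsCompact (Metric.sphere (0 : EuclideanSpace ℝ (Fin n)) 1) :=
    isCompact_sphere 0 1
  have hnhds : ∀ ξ ∈ Metric.sphere (0 : EuclideanSpace ℝ (Fin n)) 1, U ξ ∈ 𝓝 ξ := by
    intro ξ hξ
    have hξ1 : ‖ξ‖ = 1 := by simpa using hξ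
    have hopen : IsOpen (U ξ) := by
      have : U ξ = (fun η => f (t ξ • η)) ⁻¹' Set.Ioi M := rfl
      rw [this]
      exact (hf.comp (continuous_const_smul _)).isOpen_preimage _ isOpen_Ioi
    exact hopen.mem_nhds (htM ξ hξ1)
  obtain ⟨s, hs, hcover⟩ := hcomp.elim_nhds_subcover U hnhds
  have hRpos : (0:ℝ) < 1 + ∑ ξ ∈ s, t ξ := by
    have : (0:ℝ) ≤ ∑ ξ ∈ s, t ξ := Finset.sum_nonneg fun η _ => (ht0 η).le
    linarith
  refine ⟨1 + ∑ ξ ∈ s, t ξ, hRpos, fun x hx => ?_⟩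
  have hxpos : 0 < ‖x‖ := lt_trans hRpos hx
  set ξ : EuclideanSpace ℝ (Fin n) := ‖x‖⁻¹ • x with hξdef
  have hξ1 : ‖ξ‖ = 1 := by
    rw [hξdef, norm_smul, norm_inv, norm_norm, inv_mul_cancel₀ hxpos.ne']
  have hξsphere : ξ ∈ Metric.sphere (0 : EuclideanSpace ℝ (Fin n)) 1 := by
    simpa using hξ1
  obtain ⟨ξ0, hξ0s, hξU⟩ := Set.mem_iUnion₂.mp (hcover hξsphere)
  have hle : t ξ0 ≤ ‖x‖ := by
    have h1 : t ξ0 ≤ ∑ η ∈ s, t η :=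
      Finset.single_le_sum (fun η _ => (ht0 η).le) hξ0s
    linarith
  have hmem : M < f (t ξ0 • ξ) := hξU
  have hmono' := hmono ξ hξ1 (Set.mem_Ici.mpr (ht0 ξ0).le)
    (Set.mem_Ici.mpr hxpos.le) hle
  have hxeq : ‖x‖ • ξ = x := by
    rw [hξdef, smul_smul, mul_inv_cancel₀ hxpos.ne', one_smul]
  calc M < f (t ξ0 • ξ) := hmem
    _ ≤ f (‖x‖ • ξ) := hmono'
    _ = f x := by rw [hxeq]

end IDCP
end
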